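/- Each generator i₁, p₀₁, p₁₂, h of the group 𝔊 preserves the linear form a₁+a₅+a₇+a₈−a₂−a₃, i.e. composing this linear form with any of the generators yields the same linear form. -/

import Mathlib

def i1 (a : Fin 8 → ℤ) : Fin 8 → ℤ :=
  ![a 4, a 3, a 2, a 1, a 0, a 6, a 5, -a 1 + a 3 - a 5 + a 6 + a 7]

def p01 (a : Fin 8 → ℤ) : Fin 8 → ℤ :=
  ![a 0, a 1, -a 1 + a 3 + a 4, a 1 + a 2 - a 4, a 4, a 5, a 6,
    -a 1 - a 2 + a 3 + a 4 + a 7]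

def p12 (a : Fin 8 → ℤ) : Fin 8 → ℤ :=
  ![a 0, a 1, -a 1 + a 3 + a 7, a 1 + a 2 - a 7, -a 1 - a 2 + a 3 + a 4 + a 7,
    a 1 + a 2 - a 3 + a 5 - a 7, a 6, a 7]

def hmap (a : Fin 8 → ℤ) : Fin 8 → ℤ :=
  ![a 0, a 1, a 2 + a 5 - a 7, a 3 - a 5 + a 7, a 4 + a 5 - a 7, a 7,
    -a 5 + a 6 + a 7, a 5]

/-- The exceptional linear form `a₁+a₅+a₇+a₈−a₂−a₃`. -/
def excForm (a : Fin 8 → ℤ) : ℤ := a 0 + a 4 + a 6 + a 7 - a 1 - a 2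

theorem excForm_i1 (a : Fin 8 → ℤ) : excForm (i1 a) = excForm a := by
  simp only [excForm, i1, Matrix.cons_val]
  ring

theorem excForm_p01 (a : Fin 8 → ℤ) : excForm (p01 a) = excForm a := by
  simp only [excForm, p01, Matrix.cons_val]
  ring

theorem excForm_p12 (a : Fin 8 → ℤ) : excForm (p12 a) = excForm a := by
  simp only [excForm, p12, Matrix.cons_val]
  ring

theorem excForm_hmap (a : Fin 8 → ℤ) : excForm (hmap a) = excForm a := by
  simp only [excForm, hmap, Matrix.cons_val]
  ring

theorem generators_preserve_exceptional_form :
    ∀ g ∈ [i1, p01, p12, hmap], ∀ a : Fin 8 → ℤ, excForm (g a) = excForm a := by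
  simp only [List.mem_cons, List.not_mem_nil, or_false]
  rintro g (rfl | rfl | rfl | rfl)
  exacts [excForm_i1, excForm_p01, excForm_p12, excForm_hmap]
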